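/- Let I be a dyadic interval and let φ ∈ L^∞(I) with ∫_I φ = 0. For an integer N ≥ 3, define the averaged quasi-periodisation Q̄Π_I^N φ : I → ℝ as follows: for x belonging to a subinterval J ∈ ch^N(I) that does not contain an endpoint of the closure of I, set Q̄Π_I^N φ(x) := (E_{ch²(I)}φ)(ψ_{J,I}(x)), where E_{ch²(I)}φ := Σ_{K ∈ ch²(I)} ⟨φ⟩_K 1_K and ψ_{J,I} is the increasing affine bijection from J onto I; for x belonging to one of the two subintervals J ∈ ch^N(I) touching the boundary of I, set Q̄Π_I^N φ(x) := 0. Then for every g ∈ L^1(I), ∫_I g(x)·Q̄Π_I^N φ(x) dx → 0 as N → ∞; in particular, Q̄Π_I^N φ → 0 weakly in L^q(I) for every q ∈ (1,∞) and weak-* in L^∞(I). -/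

import Mathlib

/-!
On every cell `J ∈ ch^N(I)` the quasi-periodisation has mean zero: it vanishes on the two
boundary cells, and on the others it is `E_{ch²(I)} φ` rescaled from `I` onto `J`, whose mean
over `I` is that of `φ`. It is also bounded by `sup_I |φ|`. Against a uniformly continuous `g`
each cell therefore contributes at most `osc_J g · sup |φ| · |J|`, which sums to `o(1)` as the
mesh `2^{-N}|I|` tends to `0`; a general `g ∈ L¹(I)` is approximated in `L¹(I)` by continuous
compactly supported functions, at a cost of `sup |φ| · ‖g - g_c‖₁`.
-/

open MeasureTheory Set Filter Topology

/-- Average of `φ` over the interval `[a, b)`. -/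
noncomputable def avgOn (φ : ℝ → ℝ) (a b : ℝ) : ℝ :=
  (b - a)⁻¹ * ∫ x in Set.Ico a b, φ x

/-- `E_{ch²(I)} φ` at `y`: the average of `φ` over the grandchild (subinterval of
length `L/4`) of `I = [α, α + L)` containing `y`. -/
noncomputable def grandAvg (φ : ℝ → ℝ) (α L : ℝ) (y : ℝ) : ℝ :=
  avgOn φ (α + (⌊(y - α) / (L / 4)⌋ : ℝ) * (L / 4))
    (α + ((⌊(y - α) / (L / 4)⌋ : ℝ) + 1) * (L / 4))

/-- The averaged quasi-periodisation `Q̄Π_I^N φ` of `φ` over `I = [α, α + L)` of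
frequency `N`: on each subinterval `J ∈ ch^N(I)` not touching the boundary of `I`
it equals `(E_{ch²(I)} φ) ∘ ψ_{J,I}`, where `ψ_{J,I}` is the increasing affine
bijection of `J` onto `I`; on the two boundary subintervals it is `0`
(recall `⟨φ⟩_I = 0`). -/
noncomputable def quasiPer (φ : ℝ → ℝ) (α L : ℝ) (N : ℕ) (x : ℝ) : ℝ :=
  if ⌊(x - α) / (L / 2 ^ N)⌋ = 0 ∨ ⌊(x - α) / (L / 2 ^ N)⌋ = 2 ^ N - 1 then 0
  else grandAvg φ α L
    (α + (x - (α + (⌊(x - α) / (L / 2 ^ N)⌋ : ℝ) * (L / 2 ^ N))) * 2 ^ N)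

namespace QuasiPeriodisation

/-- For `h = L / 2 ^ N` and `j < 2 ^ N` these are the intervals of `ch^N([α, α + L))`. -/
def cell (α h : ℝ) (j : ℕ) : Set ℝ := Ico (α + j * h) (α + (j + 1) * h)

lemma floor_div_eq_of_mem_cell {α h x : ℝ} {j : ℕ} (hh : 0 < h) (hx : x ∈ cell α h j) :
    ⌊(x - α) / h⌋ = j := by
  rw [Int.floor_eq_iff, le_div_iff₀ hh, div_lt_iff₀ hh]
  push_cast
  constructor <;> linarith [hx.1, hx.2]

lemma volume_real_cell {α h : ℝ} (hh : 0 ≤ h) (j : ℕ) : volume.real (cell α h j) = h := by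
  rw [cell, Real.volume_real_Ico_of_le (by nlinarith)]
  ring

lemma cell_subset_Ico {α L : ℝ} {m j : ℕ} (hL : 0 ≤ L) (hj : j < m) :
    cell α (L / m) j ⊆ Ico α (α + L) := by
  have hm : (0 : ℝ) < m := by exact_mod_cast j.zero_le.trans_lt hj
  have hjm : (j : ℝ) + 1 ≤ m := by exact_mod_cast hj
  refine Ico_subset_Ico ?_ ?_
  · have : 0 ≤ (j : ℝ) * (L / m) := by positivity
    linarith
  · calc α + (j + 1) * (L / m) ≤ α + m * (L / m) := by gcongr
      _ = α + L := by field_simp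

lemma exists_mem_cell {α L y : ℝ} {m : ℕ} (hm : m ≠ 0) (hy : y ∈ Ico α (α + L)) :
    ∃ j < m, y ∈ cell α (L / m) j := by
  have hm' : (0 : ℝ) < m := by positivity
  have hh : 0 < L / m := div_pos (by linarith [hy.1, hy.2]) hm'
  have hy0 : 0 ≤ (y - α) / (L / m) := div_nonneg (by linarith [hy.1]) hh.le
  refine ⟨⌊(y - α) / (L / m)⌋₊, ?_, ?_, ?_⟩
  · rw [Nat.floor_lt hy0, div_lt_iff₀ hh]
    field_simp
    linarith [hy.2]
  · have := (le_div_iff₀ hh).1 (Nat.floor_le hy0)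
    linarith
  · have := (div_lt_iff₀ hh).1 (Nat.lt_floor_add_one ((y - α) / (L / m)))
    linarith

lemma setIntegral_Ico_eq_sum_setIntegral_cell {f : ℝ → ℝ} {α L : ℝ} {m : ℕ} (hm : m ≠ 0)
    (hL : 0 ≤ L) (hf : ∀ j < m, IntegrableOn f (cell α (L / m) j)) :
    ∫ x in Ico α (α + L), f x = ∑ j ∈ Finset.range m, ∫ x in cell α (L / m) j, f x := by
  set a : ℕ → ℝ := fun j => α + j * (L / m)
  have ha : ∀ j, a j ≤ a (j + 1) := fun j => by
    simp only [a]; push_cast; linarith [div_nonneg hL (Nat.cast_nonneg m)]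
  have hcell : ∀ j, cell α (L / m) j = Ico (a j) (a (j + 1)) := fun j => by
    simp only [cell, a]; push_cast; rfl
  have h0 : a 0 = α := by simp [a]
  have hm' : a m = α + L := by simp only [a]; field_simp
  simp only [hcell, integral_Ico_eq_integral_Ioc, ← intervalIntegral.integral_of_le (ha _)]
  rw [intervalIntegral.sum_integral_adjacent_intervals, h0, hm',
    intervalIntegral.integral_of_le (by linarith)]
  intro j hj
  rw [intervalIntegrable_iff_integrableOn_Ioc_of_le (ha j)]
  exact (hcell j ▸ hf j hj).congr_set_ae Ico_ae_eq_Ioc.symm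

section Oscillation

variable {g F : ℝ → ℝ} {B : ℝ}

lemma abs_setIntegral_mul_le {s : Set ℝ} (hg : IntegrableOn g s) (hF : ∀ x, |F x| ≤ B) :
    |∫ x in s, g x * F x| ≤ B * ∫ x in s, |g x| := by
  refine (norm_integral_le_of_norm_le (f := fun x => g x * F x) (hg.abs.const_mul B)
    (ae_of_all _ fun x => ?_)).trans_eq (integral_const_mul _ _)
  rw [Real.norm_eq_abs, abs_mul, mul_comm]
  exact mul_le_mul_of_nonneg_right (hF x) (abs_nonneg _)

lemma abs_setIntegral_Ico_mul_le_of_integral_eq_zero {a b η : ℝ} (hab : a ≤ b)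
    (hg : IntegrableOn g (Ico a b)) (hosc : ∀ x ∈ Ico a b, |g x - g a| ≤ η)
    (hF : ∀ x, |F x| ≤ B) (hFm : AEStronglyMeasurable F) (hF0 : ∫ x in Ico a b, F x = 0) :
    |∫ x in Ico a b, g x * F x| ≤ η * B * (b - a) := by
  have hB : 0 ≤ B := (abs_nonneg _).trans (hF a)
  have hFint : IntegrableOn F (Ico a b) :=
    Measure.integrableOn_of_bounded measure_Ico_lt_top.ne hFm (ae_of_all _ hF)
  have hcentre : ∫ x in Ico a b, g x * F x = ∫ x in Ico a b, (g x - g a) * F x := by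
    simp_rw [sub_mul]
    rw [integral_sub (hg.mul_bdd hFm.restrict (ae_of_all _ hF)) (hFint.const_mul _),
      integral_const_mul, hF0, mul_zero, sub_zero]
  rw [hcentre, ← Real.volume_real_Ico_of_le hab, ← Real.norm_eq_abs]
  refine norm_setIntegral_le_of_norm_le_const measure_Ico_lt_top fun x hx => ?_
  rw [Real.norm_eq_abs, abs_mul]
  exact (mul_le_mul_of_nonneg_left (hF x) (abs_nonneg _)).trans
    (mul_le_mul_of_nonneg_right (hosc x hx) hB)

lemma abs_setIntegral_mul_le_of_cell_integral_eq_zero {α L δ η : ℝ} {m : ℕ} (hm : m ≠ 0)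
    (hL : 0 ≤ L) (hg : IntegrableOn g (Ico α (α + L)))
    (hosc : ∀ x y, dist x y < δ → |g x - g y| ≤ η) (hmesh : L / m < δ)
    (hF : ∀ x, |F x| ≤ B) (hFm : AEStronglyMeasurable F)
    (hF0 : ∀ j < m, ∫ x in cell α (L / m) j, F x = 0) :
    |∫ x in Ico α (α + L), g x * F x| ≤ η * B * L := by
  have hh : 0 ≤ L / m := by positivity
  have hcell : ∀ j < m, |∫ x in cell α (L / m) j, g x * F x| ≤ η * B * (L / m) := by
    intro j hj
    have hlen : α + (j + 1) * (L / m) - (α + j * (L / m)) = L / m := by ring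
    have hnear : ∀ x ∈ cell α (L / m) j, dist x (α + j * (L / m)) < δ := fun x hx => by
      rw [Real.dist_eq, abs_of_nonneg (by linarith [hx.1])]
      linarith [hx.2]
    have h := abs_setIntegral_Ico_mul_le_of_integral_eq_zero (by linarith)
      (hg.mono_set (cell_subset_Ico hL hj)) (fun x hx => hosc x _ (hnear x hx)) hF hFm
      (hF0 j hj)
    rwa [hlen] at h
  rw [setIntegral_Ico_eq_sum_setIntegral_cell hm hL fun j hj =>
    (hg.mono_set (cell_subset_Ico hL hj)).mul_bdd hFm.restrict (ae_of_all _ hF)]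
  calc |∑ j ∈ Finset.range m, ∫ x in cell α (L / m) j, g x * F x|
      ≤ ∑ j ∈ Finset.range m, |∫ x in cell α (L / m) j, g x * F x| :=
        Finset.abs_sum_le_sum_abs _ _
    _ ≤ ∑ j ∈ Finset.range m, η * B * (L / m) :=
        Finset.sum_le_sum fun j hj => hcell j (Finset.mem_range.1 hj)
    _ = η * B * L := by
        rw [Finset.sum_const, Finset.card_range, nsmul_eq_mul]
        field_simp

end Oscillation

theorem tendsto_setIntegral_mul_of_cell_integral_eq_zero {α L B : ℝ} {g : ℝ → ℝ}
    {F : ℕ → ℝ → ℝ} {m : ℕ → ℕ} (hm : Tendsto m atTop atTop) (hL : 0 ≤ L)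
    (hg : IntegrableOn g (Ico α (α + L))) (hF : ∀ N x, |F N x| ≤ B)
    (hFm : ∀ N, AEStronglyMeasurable (F N))
    (hF0 : ∀ N, ∀ j < m N, ∫ x in cell α (L / m N) j, F N x = 0) :
    Tendsto (fun N => ∫ x in Ico α (α + L), g x * F N x) atTop (𝓝 0) := by
  have hB : 0 ≤ B := (abs_nonneg _).trans (hF 0 0)
  refine NormedAddGroup.tendsto_nhds_zero.2 fun ε hε => ?_
  obtain ⟨gc, hgc_supp, hgc_close, hgc_cont, hgc_int⟩ :=
    hg.exists_hasCompactSupport_integral_sub_le (ε := ε / (2 * (B + 1))) (by positivity)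
  obtain ⟨δ, hδ, hosc⟩ := Metric.uniformContinuous_iff.1
    (hgc_supp.uniformContinuous_of_continuous hgc_cont) (ε / (2 * (B + 1) * (L + 1)))
    (by positivity)
  have hmesh : Tendsto (fun N => L / m N) atTop (𝓝 0) :=
    tendsto_const_nhds.div_atTop (tendsto_natCast_atTop_atTop.comp hm)
  filter_upwards [hm.eventually_ne_atTop 0, hmesh.eventually (gt_mem_nhds hδ)] with N hmN hN
  have hfar : |∫ x in Ico α (α + L), (g - gc) x * F N x| ≤ B * (ε / (2 * (B + 1))) := by
    refine (abs_setIntegral_mul_le (hg.sub hgc_int) (hF N)).trans ?_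
    simp only [Pi.sub_apply, ← Real.norm_eq_abs]
    gcongr
  have hnear : |∫ x in Ico α (α + L), gc x * F N x| ≤ ε / (2 * (B + 1) * (L + 1)) * B * L :=
    abs_setIntegral_mul_le_of_cell_integral_eq_zero hmN hL hgc_int
      (fun x y hxy => (Real.dist_eq _ _ ▸ hosc hxy).le) hN (hF N) (hFm N) (hF0 N)
  have hsplit : ∫ x in Ico α (α + L), g x * F N x =
      (∫ x in Ico α (α + L), (g - gc) x * F N x) + ∫ x in Ico α (α + L), gc x * F N x := by
    rw [← integral_add ((hg.sub hgc_int).mul_bdd (hFm N).restrict (ae_of_all _ (hF N)))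
      (hgc_int.mul_bdd (hFm N).restrict (ae_of_all _ (hF N)))]
    simp only [Pi.sub_apply, ← add_mul, sub_add_cancel]
  calc ‖∫ x in Ico α (α + L), g x * F N x‖
      ≤ B * (ε / (2 * (B + 1))) + ε / (2 * (B + 1) * (L + 1)) * B * L := by
        rw [hsplit, Real.norm_eq_abs]
        exact (abs_add_le _ _).trans (add_le_add hfar hnear)
    _ < ε := by
        field_simp
        nlinarith [mul_pos hε (add_pos_of_nonneg_of_pos hB one_pos), mul_nonneg hB hL]

section

variable {φ : ℝ → ℝ} {α L B : ℝ}

lemma sub_mul_avgOn {a b : ℝ} (hab : a < b) : (b - a) * avgOn φ a b = ∫ x in Ico a b, φ x := by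
  rw [avgOn, ← mul_assoc, mul_inv_cancel₀ (sub_ne_zero.2 hab.ne'), one_mul]

lemma abs_avgOn_le {a b : ℝ} (hab : a < b) (hB : ∀ x ∈ Ico a b, |φ x| ≤ B) :
    |avgOn φ a b| ≤ B := by
  have hba : 0 < b - a := sub_pos.2 hab
  have h := norm_setIntegral_le_of_norm_le_const (f := φ) (μ := volume) measure_Ico_lt_top hB
  rw [Real.volume_real_Ico_of_le hab.le, Real.norm_eq_abs, ← sub_mul_avgOn hab, abs_mul,
    abs_of_pos hba, mul_comm B] at h
  exact le_of_mul_le_mul_left h hba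

lemma grandAvg_eq_avgOn_of_mem_cell (hL : 0 < L) {i : ℕ} {y : ℝ} (hy : y ∈ cell α (L / 4) i) :
    grandAvg φ α L y = avgOn φ (α + i * (L / 4)) (α + (i + 1) * (L / 4)) := by
  rw [grandAvg, floor_div_eq_of_mem_cell (by positivity) hy]
  push_cast
  rfl

lemma abs_grandAvg_le (hB : ∀ x ∈ Ico α (α + L), |φ x| ≤ B) {y : ℝ}
    (hy : y ∈ Ico α (α + L)) : |grandAvg φ α L y| ≤ B := by
  have hL : 0 < L := by linarith [hy.1, hy.2]
  obtain ⟨i, hi, hyi⟩ := exists_mem_cell (m := 4) four_ne_zero hy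
  rw [Nat.cast_ofNat] at hyi
  rw [grandAvg_eq_avgOn_of_mem_cell hL hyi]
  refine abs_avgOn_le (by linarith) fun x hx => hB x ?_
  exact cell_subset_Ico (m := 4) hL.le hi (by rwa [Nat.cast_ofNat])

lemma measurable_grandAvg : Measurable (grandAvg φ α L) :=
  (measurable_of_countable fun i : ℤ =>
    avgOn φ (α + i * (L / 4)) (α + (i + 1) * (L / 4))).comp
      ((measurable_id.sub_const α).div_const _).floor

lemma setIntegral_grandAvg (hL : 0 < L) (hφ : IntegrableOn φ (Ico α (α + L))) :
    ∫ y in Ico α (α + L), grandAvg φ α L y = ∫ x in Ico α (α + L), φ x := by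
  have hcell : ∀ i : ℕ, cell α (L / (4 : ℕ)) i = cell α (L / 4) i := fun i => by
    rw [Nat.cast_ofNat]
  have hconst : ∀ i : ℕ, EqOn (grandAvg φ α L) (fun _ => avgOn φ (α + i * (L / 4))
      (α + (i + 1) * (L / 4))) (cell α (L / 4) i) := fun i y hy =>
    grandAvg_eq_avgOn_of_mem_cell hL hy
  rw [setIntegral_Ico_eq_sum_setIntegral_cell four_ne_zero hL.le,
    setIntegral_Ico_eq_sum_setIntegral_cell four_ne_zero hL.le]
  · refine Finset.sum_congr rfl fun i _ => ?_
    rw [hcell, setIntegral_congr_fun (s := cell α (L / 4) i) measurableSet_Ico (hconst i),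
      setIntegral_const, volume_real_cell (by positivity), smul_eq_mul, cell]
    convert sub_mul_avgOn (φ := φ) (a := α + i * (L / 4)) (b := α + (i + 1) * (L / 4))
      (by linarith) using 1
    ring
  · exact fun j hj => hφ.mono_set (cell_subset_Ico hL.le hj)
  · intro i _
    rw [hcell, integrableOn_congr_fun (hconst i) measurableSet_Ico]
    exact integrableOn_const measure_Ico_lt_top.ne

lemma quasiPer_eq_grandAvg_fract (hL : L ≠ 0) (N : ℕ) (x : ℝ) :
    quasiPer φ α L N x =
      if ⌊(x - α) / (L / 2 ^ N)⌋ = 0 ∨ ⌊(x - α) / (L / 2 ^ N)⌋ = 2 ^ N - 1 then 0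
      else grandAvg φ α L (α + L * Int.fract ((x - α) / (L / 2 ^ N))) := by
  rw [quasiPer, Int.fract]
  congr 2
  field_simp
  ring

lemma abs_quasiPer_le (hL : 0 < L) (hB : ∀ x ∈ Ico α (α + L), |φ x| ≤ B) (N : ℕ) (x : ℝ) :
    |quasiPer φ α L N x| ≤ B := by
  rw [quasiPer_eq_grandAvg_fract hL.ne']
  split_ifs
  · simpa using (abs_nonneg _).trans (hB α (left_mem_Ico.2 (by linarith)))
  · refine abs_grandAvg_le hB ⟨?_, ?_⟩
    · nlinarith [Int.fract_nonneg ((x - α) / (L / 2 ^ N))]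
    · nlinarith [Int.fract_lt_one ((x - α) / (L / 2 ^ N))]

lemma measurable_quasiPer (N : ℕ) : Measurable (quasiPer φ α L N) := by
  have hfloor : Measurable fun x : ℝ => ⌊(x - α) / (L / 2 ^ N)⌋ :=
    ((measurable_id.sub_const α).div_const _).floor
  refine Measurable.ite ((hfloor (measurableSet_singleton 0)).union
    (hfloor (measurableSet_singleton _))) measurable_const (measurable_grandAvg.comp ?_)
  fun_prop

lemma setIntegral_cell_quasiPer (hL : 0 < L) (hφ : IntegrableOn φ (Ico α (α + L)))
    (hmean : ∫ x in Ico α (α + L), φ x = 0) (N : ℕ) (j : ℕ) :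
    ∫ x in cell α (L / 2 ^ N) j, quasiPer φ α L N x = 0 := by
  have hfloor : ∀ x ∈ cell α (L / 2 ^ N) j, ⌊(x - α) / (L / 2 ^ N)⌋ = j := fun x hx =>
    floor_div_eq_of_mem_cell (by positivity) hx
  by_cases hj : (j : ℤ) = 0 ∨ (j : ℤ) = 2 ^ N - 1
  · have hzero : EqOn (quasiPer φ α L N) 0 (cell α (L / 2 ^ N) j) := fun x hx => by
      rw [quasiPer, hfloor x hx, if_pos hj, Pi.zero_apply]
    exact (setIntegral_congr_fun measurableSet_Ico hzero).trans (integral_zero _ _)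
  · set d : ℝ := α - 2 ^ N * (α + j * (L / 2 ^ N)) with hd
    have hval : EqOn (quasiPer φ α L N) (fun x => grandAvg φ α L (2 ^ N * x + d))
        (cell α (L / 2 ^ N) j) := fun x hx => by
      rw [quasiPer, hfloor x hx, if_neg hj, hd]
      push_cast
      ring_nf
    have hleft : 2 ^ N * (α + j * (L / 2 ^ N)) + d = α := by ring
    have hright : 2 ^ N * (α + (j + 1) * (L / 2 ^ N)) + d = α + L := by
      rw [hd]; field_simp; ring
    rw [setIntegral_congr_fun (s := cell α (L / 2 ^ N) j) measurableSet_Ico hval, cell,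
      integral_Ico_eq_integral_Ioc,
      ← intervalIntegral.integral_of_le (by gcongr; linarith),
      intervalIntegral.integral_comp_mul_add _ (by positivity), hleft, hright,
      intervalIntegral.integral_of_le (by linarith), ← integral_Ico_eq_integral_Ioc,
      setIntegral_grandAvg hL hφ, hmean, smul_zero]

end

end QuasiPeriodisation

theorem statement19 (n k : ℤ) (φ : ℝ → ℝ) (hmeas : Measurable φ)
    (hbdd : ∃ B : ℝ, ∀ x ∈ Set.Ico ((k : ℝ) * (2 : ℝ) ^ n) (((k : ℝ) + 1) * (2 : ℝ) ^ n),
      |φ x| ≤ B)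
    (hmean : (∫ x in Set.Ico ((k : ℝ) * (2 : ℝ) ^ n) (((k : ℝ) + 1) * (2 : ℝ) ^ n), φ x) = 0)
    (g : ℝ → ℝ)
    (hg : IntegrableOn g (Set.Ico ((k : ℝ) * (2 : ℝ) ^ n) (((k : ℝ) + 1) * (2 : ℝ) ^ n))) :
    Tendsto (fun N : ℕ =>
        ∫ x in Set.Ico ((k : ℝ) * (2 : ℝ) ^ n) (((k : ℝ) + 1) * (2 : ℝ) ^ n),
          g x * quasiPer φ ((k : ℝ) * (2 : ℝ) ^ n) ((2 : ℝ) ^ n) N x)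
      atTop (𝓝 0) := by
  obtain ⟨B, hB⟩ := hbdd
  have hL : (0 : ℝ) < 2 ^ n := by positivity
  have hI : ((k : ℝ) + 1) * 2 ^ n = k * 2 ^ n + 2 ^ n := by ring
  rw [hI] at hB hmean hg ⊢
  have hφ : IntegrableOn φ (Ico (k * 2 ^ n) (k * 2 ^ n + 2 ^ n)) :=
    Measure.integrableOn_of_bounded measure_Ico_lt_top.ne hmeas.aestronglyMeasurable
      ((ae_restrict_iff' measurableSet_Ico).2 (ae_of_all _ hB))
  refine QuasiPeriodisation.tendsto_setIntegral_mul_of_cell_integral_eq_zero (m := (2 ^ ·))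
    (tendsto_pow_atTop_atTop_of_one_lt one_lt_two) hL.le hg
    (QuasiPeriodisation.abs_quasiPer_le hL hB)
    (fun N => QuasiPeriodisation.measurable_quasiPer N |>.aestronglyMeasurable) fun N j _ => ?_
  simpa only [Nat.cast_pow, Nat.cast_ofNat] using
    QuasiPeriodisation.setIntegral_cell_quasiPer hL hφ hmean N j
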